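/- arXiv:math/9805019 — 2 statements merged into one kernel-verified Lean document; each statement's English description precedes it below -/
import Mathlib

section
/- Let n be a natural number, let P : ℝⁿ → Matrix (Fin n) (Fin n) ℝ be smooth with P^{kl}(x) = −P^{lk}(x) for all k, l, x, let a : ℝⁿ → ℝⁿ be smooth, let φ : ℝⁿ → ℝ be smooth, and let (P̃, ã) be the gauge transform of (P, a) by φ. Then the map Ψ on smooth functions defined by Ψ(f) := e^{−φ} f is ℝ-linear, bijective on the space of smooth real-valued functions on ℝⁿ, and intertwines the two brackets: Ψ({f, g}_{(P,a)}) = {Ψ(f), Ψ(g)}_{(P̃,ã)} for all smooth f, g. In particular, if (P,a) is a Jacobi tensor, Ψ is an isomorphism of the Lie algebra of smooth functions with bracket {·,·}_{(P,a)} onto the Lie algebra with bracket {·,·}_{(P̃,ã)}. -/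
/-- Partial derivative `∂f/∂x^k` at `x`. -/
noncomputable def pd {n : ℕ} (f : (Fin n → ℝ) → ℝ) (k : Fin n) (x : Fin n → ℝ) : ℝ :=
  fderiv ℝ f x (Pi.single k 1)

/-- The Jacobi bracket `{f,g}_{(P,a)}`. -/
noncomputable def jacobiBracket {n : ℕ} (P : (Fin n → ℝ) → Matrix (Fin n) (Fin n) ℝ)
    (a : (Fin n → ℝ) → Fin n → ℝ) (f g : (Fin n → ℝ) → ℝ) : (Fin n → ℝ) → ℝ :=
  fun x => (∑ k, ∑ l, P x k l * pd f k x * pd g l x)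
    + ∑ k, a x k * (f x * pd g k x - g x * pd f k x)

/-- `(P,a)` is a Jacobi tensor: its bracket satisfies the Jacobi identity on smooth functions. -/
def IsJacobiTensor {n : ℕ} (P : (Fin n → ℝ) → Matrix (Fin n) (Fin n) ℝ)
    (a : (Fin n → ℝ) → Fin n → ℝ) : Prop :=
  ∀ f g h : (Fin n → ℝ) → ℝ, ContDiff ℝ (⊤ : ℕ∞) f → ContDiff ℝ (⊤ : ℕ∞) g → ContDiff ℝ (⊤ : ℕ∞) h →
    jacobiBracket P a f (jacobiBracket P a g h)
      + jacobiBracket P a g (jacobiBracket P a h f)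
      + jacobiBracket P a h (jacobiBracket P a f g) = 0

/-- Gauge transform of the bivector: `P̃^{kl}(x) = e^{φ(x)} P^{kl}(x)`. -/
noncomputable def gaugeP {n : ℕ} (P : (Fin n → ℝ) → Matrix (Fin n) (Fin n) ℝ)
    (φ : (Fin n → ℝ) → ℝ) : (Fin n → ℝ) → Matrix (Fin n) (Fin n) ℝ :=
  fun x => Matrix.of fun k l => Real.exp (φ x) * P x k l

/-- Gauge transform of the vector field:
`ã^k(x) = e^{φ(x)} (a^k(x) - Σ_j P^{kj}(x) ∂φ/∂x^j(x))`. -/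
noncomputable def gaugeA {n : ℕ} (P : (Fin n → ℝ) → Matrix (Fin n) (Fin n) ℝ)
    (a : (Fin n → ℝ) → Fin n → ℝ) (φ : (Fin n → ℝ) → ℝ) : (Fin n → ℝ) → Fin n → ℝ :=
  fun x k => Real.exp (φ x) * (a x k - ∑ j, P x k j * pd φ j x)

lemma hasFDerivAt_expNeg {n : ℕ} (φ : (Fin n → ℝ) → ℝ) (hφ : ContDiff ℝ (⊤ : ℕ∞) φ) (x : Fin n → ℝ) :
    HasFDerivAt (fun y => Real.exp (-(φ y))) (Real.exp (-(φ x)) • (-(fderiv ℝ φ x))) x := by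
  have h1 : HasFDerivAt φ (fderiv ℝ φ x) x := (hφ.differentiable (by simp) x).hasFDerivAt
  have h2 : HasFDerivAt (fun y => -(φ y)) (-(fderiv ℝ φ x)) x := h1.neg
  exact (Real.hasDerivAt_exp (-(φ x))).comp_hasFDerivAt x h2

lemma pd_psi {n : ℕ} (φ f : (Fin n → ℝ) → ℝ) (hφ : ContDiff ℝ (⊤ : ℕ∞) φ) (hf : ContDiff ℝ (⊤ : ℕ∞) f)
    (k : Fin n) (x : Fin n → ℝ) :
    pd (fun y => Real.exp (-(φ y)) * f y) k x
      = Real.exp (-(φ x)) * (pd f k x - f x * pd φ k x) := by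
  have hf' : HasFDerivAt f (fderiv ℝ f x) x := (hf.differentiable (by simp) x).hasFDerivAt
  have hE := hasFDerivAt_expNeg φ hφ x
  have h : HasFDerivAt (fun y => Real.exp (-(φ y)) * f y) _ x := hE.mul hf'
  rw [pd, h.fderiv]
  simp [pd]
  ring

lemma key_sum {n : ℕ} (p : Fin n → Fin n → ℝ) (hp : ∀ k l, p k l = -p l k)
    (u v w A : Fin n → ℝ) (F G : ℝ) :
    ((∑ k, ∑ l, p k l * (u k - F * w k) * (v l - G * w l))
      + ∑ k, (A k - ∑ j, p k j * w j) * (F * (v k - G * w k) - G * (u k - F * w k)))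
    = (∑ k, ∑ l, p k l * u k * v l) + ∑ k, A k * (F * v k - G * u k) := by
  have swap : ∀ x y : Fin n → ℝ,
      (∑ k, ∑ l, p k l * x k * y l) = -∑ k, ∑ l, p k l * y k * x l := by
    intro x y
    rw [Finset.sum_comm, ← Finset.sum_neg_distrib]
    refine Finset.sum_congr rfl fun l _ => ?_
    rw [← Finset.sum_neg_distrib]
    refine Finset.sum_congr rfl fun k _ => ?_
    rw [hp]; ring
  have hww : (∑ k, ∑ l, p k l * w k * w l) = 0 := by
    have := swap w w; linarith
  have hswap1 : (∑ k, ∑ l, p k l * w k * v l) = -∑ k, ∑ l, p k l * v k * w l := swap w v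
  have h1 : (∑ k, ∑ l, p k l * (u k - F * w k) * (v l - G * w l))
      = (∑ k, ∑ l, p k l * u k * v l) - F * (∑ k, ∑ l, p k l * w k * v l)
        - G * (∑ k, ∑ l, p k l * u k * w l) + F * G * (∑ k, ∑ l, p k l * w k * w l) := by
    simp only [Finset.mul_sum, ← Finset.sum_sub_distrib, ← Finset.sum_add_distrib]
    refine Finset.sum_congr rfl fun k _ => ?_
    refine Finset.sum_congr rfl fun l _ => ?_
    ring
  have hsplit : (∑ k, (A k - ∑ j, p k j * w j) * (F * (v k - G * w k) - G * (u k - F * w k)))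
      = (∑ k, A k * (F * v k - G * u k)) - ∑ k, ∑ j, p k j * w j * (F * v k - G * u k) := by
    rw [← Finset.sum_sub_distrib]
    refine Finset.sum_congr rfl fun k _ => ?_
    rw [sub_mul, Finset.sum_mul]
    have hX : F * (v k - G * w k) - G * (u k - F * w k) = F * v k - G * u k := by ring
    rw [hX]
  have h2 : (∑ k, ∑ j, p k j * w j * (F * v k - G * u k))
      = F * (∑ k, ∑ l, p k l * v k * w l) - G * (∑ k, ∑ l, p k l * u k * w l) := by
    simp only [Finset.mul_sum, ← Finset.sum_sub_distrib]
    refine Finset.sum_congr rfl fun k _ => ?_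
    refine Finset.sum_congr rfl fun l _ => ?_
    ring
  rw [h1, hsplit, h2, hww, hswap1]
  ring

theorem gauge_map_lie_isomorphism {n : ℕ} (P : (Fin n → ℝ) → Matrix (Fin n) (Fin n) ℝ)
    (a : (Fin n → ℝ) → Fin n → ℝ) (φ : (Fin n → ℝ) → ℝ)
    (hP : ∀ k l, ContDiff ℝ (⊤ : ℕ∞) (fun x => P x k l))
    (hPskew : ∀ x k l, P x k l = - P x l k)
    (ha : ∀ k, ContDiff ℝ (⊤ : ℕ∞) (fun x => a x k))
    (hφ : ContDiff ℝ (⊤ : ℕ∞) φ)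
    (Ψ : ((Fin n → ℝ) → ℝ) → ((Fin n → ℝ) → ℝ))
    (hΨ : ∀ f, Ψ f = fun x => Real.exp (-(φ x)) * f x) :
    -- Ψ is ℝ-linear
    (∀ (c : ℝ) (f g : (Fin n → ℝ) → ℝ), Ψ (c • f + g) = c • Ψ f + Ψ g)
    -- Ψ maps the space of smooth functions bijectively onto itself
    ∧ Set.BijOn Ψ {f : (Fin n → ℝ) → ℝ | ContDiff ℝ (⊤ : ℕ∞) f} {f : (Fin n → ℝ) → ℝ | ContDiff ℝ (⊤ : ℕ∞) f}
    -- Ψ intertwines the two Jacobi brackets on smooth functions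
    ∧ (∀ f g : (Fin n → ℝ) → ℝ, ContDiff ℝ (⊤ : ℕ∞) f → ContDiff ℝ (⊤ : ℕ∞) g →
        Ψ (jacobiBracket P a f g) = jacobiBracket (gaugeP P φ) (gaugeA P a φ) (Ψ f) (Ψ g)) := by
  have hexp : ContDiff ℝ (⊤ : ℕ∞) (fun x : Fin n → ℝ => Real.exp (-(φ x))) :=
    Real.contDiff_exp.comp hφ.neg
  have hexp' : ContDiff ℝ (⊤ : ℕ∞) (fun x : Fin n → ℝ => Real.exp (φ x)) :=
    Real.contDiff_exp.comp hφ
  refine ⟨?_, ⟨?_, ?_, ?_⟩, ?_⟩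
  · intro c f g
    funext y
    simp only [hΨ, Pi.add_apply, Pi.smul_apply, smul_eq_mul]
    ring
  · -- MapsTo
    intro f hf
    simp only [Set.mem_setOf_eq] at *
    rw [hΨ]
    exact hexp.mul hf
  · -- InjOn
    intro f _ g _ h
    funext y
    have h' := congrFun h y
    simp only [hΨ] at h'
    exact mul_left_cancel₀ (Real.exp_ne_zero _) h'
  · -- SurjOn
    intro g hg
    refine ⟨fun y => Real.exp (φ y) * g y, ?_, ?_⟩
    · exact hexp'.mul hg
    · rw [hΨ]
      funext y
      rw [← mul_assoc, ← Real.exp_add]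
      simp
  · -- intertwining
    intro f g hf hg
    funext x
    have hpdf : ∀ k, pd (Ψ f) k x = Real.exp (-(φ x)) * (pd f k x - f x * pd φ k x) := by
      intro k; rw [hΨ]; exact pd_psi φ f hφ hf k x
    have hpdg : ∀ k, pd (Ψ g) k x = Real.exp (-(φ x)) * (pd g k x - g x * pd φ k x) := by
      intro k; rw [hΨ]; exact pd_psi φ g hφ hg k x
    have hΨfx : Ψ f x = Real.exp (-(φ x)) * f x := by rw [hΨ]
    have hΨgx : Ψ g x = Real.exp (-(φ x)) * g x := by rw [hΨ]
    have hEE : Real.exp (φ x) * Real.exp (-(φ x)) = 1 := by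
      rw [← Real.exp_add]; simp
    set E' := Real.exp (-(φ x)) with hE'
    rw [hΨ]
    simp only [jacobiBracket, gaugeP, gaugeA, Matrix.of_apply, hpdf, hpdg, hΨfx, hΨgx]
    have r1 : (∑ k, ∑ l, Real.exp (φ x) * P x k l * (E' * (pd f k x - f x * pd φ k x))
          * (E' * (pd g l x - g x * pd φ l x)))
        = E' * ∑ k, ∑ l, P x k l * (pd f k x - f x * pd φ k x)
          * (pd g l x - g x * pd φ l x) := by
      simp only [Finset.mul_sum]
      refine Finset.sum_congr rfl fun k _ => ?_
      refine Finset.sum_congr rfl fun l _ => ?_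
      calc Real.exp (φ x) * P x k l * (E' * (pd f k x - f x * pd φ k x))
            * (E' * (pd g l x - g x * pd φ l x))
          = (Real.exp (φ x) * E') * (E' * (P x k l * (pd f k x - f x * pd φ k x)
              * (pd g l x - g x * pd φ l x))) := by ring
        _ = E' * (P x k l * (pd f k x - f x * pd φ k x)
              * (pd g l x - g x * pd φ l x)) := by rw [hEE, one_mul]
    have r2 : (∑ k, Real.exp (φ x) * (a x k - ∑ j, P x k j * pd φ j x)
          * (E' * f x * (E' * (pd g k x - g x * pd φ k x))
            - E' * g x * (E' * (pd f k x - f x * pd φ k x))))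
        = E' * ∑ k, (a x k - ∑ j, P x k j * pd φ j x)
          * (f x * (pd g k x - g x * pd φ k x) - g x * (pd f k x - f x * pd φ k x)) := by
      simp only [Finset.mul_sum]
      refine Finset.sum_congr rfl fun k _ => ?_
      calc Real.exp (φ x) * (a x k - ∑ j, P x k j * pd φ j x)
            * (E' * f x * (E' * (pd g k x - g x * pd φ k x))
              - E' * g x * (E' * (pd f k x - f x * pd φ k x)))
          = (Real.exp (φ x) * E') * (E' * ((a x k - ∑ j, P x k j * pd φ j x)
              * (f x * (pd g k x - g x * pd φ k x) - g x * (pd f k x - f x * pd φ k x)))) := by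
            ring
        _ = E' * ((a x k - ∑ j, P x k j * pd φ j x)
              * (f x * (pd g k x - g x * pd φ k x) - g x * (pd f k x - f x * pd φ k x))) := by
            rw [hEE, one_mul]
    rw [r1, r2, ← mul_add]
    congr 1
    have := key_sum (fun k l => P x k l) (fun k l => hPskew x k l)
      (fun k => pd f k x) (fun k => pd g k x) (fun k => pd φ k x) (fun k => a x k)
      (f x) (g x)
    calc (∑ k, ∑ l, P x k l * pd f k x * pd g l x)
          + ∑ k, a x k * (f x * pd g k x - g x * pd f k x)
        = (∑ k, ∑ l, P x k l * pd f k x * pd g l x)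
          + ∑ k, a x k * (f x * pd g k x - g x * pd f k x) := rfl
      _ = (∑ k, ∑ l, P x k l * (pd f k x - f x * pd φ k x) * (pd g l x - g x * pd φ l x))
          + ∑ k, (a x k - ∑ j, P x k j * pd φ j x)
            * (f x * (pd g k x - g x * pd φ k x) - g x * (pd f k x - f x * pd φ k x)) := by
          rw [this]
      _ = _ := rfl
end

section
/- Let n be a natural number, let P : ℝⁿ → Matrix (Fin n) (Fin n) ℝ be smooth with P^{kl}(x) = −P^{lk}(x) for all k, l, x, let a : ℝⁿ → ℝⁿ be smooth, and suppose (P, a) is a Jacobi tensor. Let φ : ℝⁿ → ℝ be smooth and let (P̃, ã) be the gauge transform of (P, a) by φ. Then for every real λ ≥ 0, the pair (P + λP̃, a + λã) is a Jacobi tensor; in particular the gauge construction produces an infinite family of Jacobi tensors compatible with (P, a). -/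
private lemma skew_swap' {n : ℕ} (M : Matrix (Fin n) (Fin n) ℝ) (hM : ∀ k l, M k l = - M l k)
    (b c : Fin n → ℝ) :
    ∑ k, ∑ l, M k l * b k * c l = - ∑ k, ∑ l, M k l * c k * b l := by
  have e : ∀ l k : Fin n, M k l * b k * c l = -(M l k * c l * b k) := by
    intro l k; rw [hM k l]; ring
  calc ∑ k, ∑ l, M k l * b k * c l = ∑ l, ∑ k, M k l * b k * c l := Finset.sum_comm
    _ = ∑ l, ∑ k, -(M l k * c l * b k) :=
        Finset.sum_congr rfl fun l _ => Finset.sum_congr rfl fun k _ => e l k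
    _ = - ∑ l, ∑ k, M l k * c l * b k := by simp

private lemma skew_zero' {n : ℕ} (M : Matrix (Fin n) (Fin n) ℝ) (hM : ∀ k l, M k l = - M l k)
    (b : Fin n → ℝ) : ∑ k, ∑ l, M k l * b k * b l = 0 := by
  have := skew_swap' M hM b b; linarith

private lemma alg' {n : ℕ} (Pm : Matrix (Fin n) (Fin n) ℝ) (hskew : ∀ k l, Pm k l = - Pm l k)
    (av du df dg : Fin n → ℝ) (u0 f0 g0 : ℝ) :
    ((∑ k, ∑ l, Pm k l * (du k * f0 + u0 * df k) * (du l * g0 + u0 * dg l))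
      + ∑ k, av k * ((u0 * f0) * (du k * g0 + u0 * dg k) - (u0 * g0) * (du k * f0 + u0 * df k)))
    = u0 * ((∑ k, ∑ l, (u0 * Pm k l) * df k * dg l)
        + ∑ k, (u0 * av k - ∑ j, Pm k j * du j) * (f0 * dg k - g0 * df k)) := by
  have h0 : ∑ k, ∑ l, Pm k l * du k * du l = 0 := skew_zero' Pm hskew du
  have h1 : ∑ k, ∑ l, Pm k l * du k * dg l = - ∑ k, ∑ l, Pm k l * dg k * du l :=
    skew_swap' Pm hskew du dg
  have e1 : (∑ k, ∑ l, Pm k l * (du k * f0 + u0 * df k) * (du l * g0 + u0 * dg l))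
      = (f0*g0) * (∑ k, ∑ l, Pm k l * du k * du l)
        + (f0*u0) * (∑ k, ∑ l, Pm k l * du k * dg l)
        + (u0*g0) * (∑ k, ∑ l, Pm k l * df k * du l)
        + (u0*u0) * (∑ k, ∑ l, Pm k l * df k * dg l) := by
    simp only [Finset.mul_sum, ← Finset.sum_add_distrib]
    exact Finset.sum_congr rfl fun k _ => Finset.sum_congr rfl fun l _ => by ring
  have e2 : (∑ k, av k * ((u0 * f0) * (du k * g0 + u0 * dg k) - (u0 * g0) * (du k * f0 + u0 * df k)))
      = (u0*u0) * ∑ k, av k * (f0 * dg k - g0 * df k) := by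
    rw [Finset.mul_sum]
    exact Finset.sum_congr rfl fun k _ => by ring
  have e3 : (∑ k, (u0 * av k - ∑ j, Pm k j * du j) * (f0 * dg k - g0 * df k))
      = u0 * (∑ k, av k * (f0 * dg k - g0 * df k))
        - f0 * (∑ k, ∑ l, Pm k l * dg k * du l)
        + g0 * (∑ k, ∑ l, Pm k l * df k * du l) := by
    simp only [Finset.mul_sum, ← Finset.sum_add_distrib, ← Finset.sum_sub_distrib]
    refine Finset.sum_congr rfl fun k _ => ?_
    rw [sub_mul, Finset.sum_mul]
    rw [show (∑ j, Pm k j * du j * (f0 * dg k - g0 * df k))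
        = ∑ j, (f0 * (Pm k j * dg k * du j) - g0 * (Pm k j * df k * du j)) from
      Finset.sum_congr rfl fun j _ => by ring]
    rw [Finset.sum_sub_distrib]
    ring
  have e4 : (∑ k, ∑ l, (u0 * Pm k l) * df k * dg l)
      = u0 * ∑ k, ∑ l, Pm k l * df k * dg l := by
    simp only [Finset.mul_sum]
    exact Finset.sum_congr rfl fun k _ => Finset.sum_congr rfl fun l _ => by ring
  rw [e1, e2, e3, e4, h0, h1]
  ring

private lemma pd_contDiff' {n : ℕ} {f : (Fin n → ℝ) → ℝ} (hf : ContDiff ℝ (⊤ : ℕ∞) f) (k : Fin n) :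
    ContDiff ℝ (⊤ : ℕ∞) (pd f k) :=
  (hf.fderiv_right (by simp)).clm_apply contDiff_const

private lemma pd_mul' {n : ℕ} {f g : (Fin n → ℝ) → ℝ} (hf : ContDiff ℝ (⊤ : ℕ∞) f)
    (hg : ContDiff ℝ (⊤ : ℕ∞) g) (k : Fin n) (x : Fin n → ℝ) :
    pd (fun y => f y * g y) k x = pd f k x * g x + f x * pd g k x := by
  unfold pd
  rw [fderiv_fun_mul (hf.differentiable (by simp) x) (hg.differentiable (by simp) x)]
  simp only [ContinuousLinearMap.add_apply, ContinuousLinearMap.smul_apply, smul_eq_mul]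
  ring

private lemma bracket_contDiff' {n : ℕ} {P : (Fin n → ℝ) → Matrix (Fin n) (Fin n) ℝ}
    {a : (Fin n → ℝ) → Fin n → ℝ} {f g : (Fin n → ℝ) → ℝ}
    (hP : ∀ k l, ContDiff ℝ (⊤ : ℕ∞) (fun x => P x k l)) (ha : ∀ k, ContDiff ℝ (⊤ : ℕ∞) (fun x => a x k))
    (hf : ContDiff ℝ (⊤ : ℕ∞) f) (hg : ContDiff ℝ (⊤ : ℕ∞) g) :
    ContDiff ℝ (⊤ : ℕ∞) (jacobiBracket P a f g) := by
  unfold jacobiBracket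
  apply ContDiff.add
  · apply ContDiff.sum; intro k _
    apply ContDiff.sum; intro l _
    exact ((hP k l).mul (pd_contDiff' hf k)).mul (pd_contDiff' hg l)
  · apply ContDiff.sum; intro k _
    exact (ha k).mul ((hf.mul (pd_contDiff' hg k)).sub (hg.mul (pd_contDiff' hf k)))

/-- the gauge identity `{uf, ug}_{(P,a)} = u · {f,g}_{(P',a')}` where
`P' = u P`, `a' = u a - P ∇u`. -/
private lemma gauge_bracket {n : ℕ} {P : (Fin n → ℝ) → Matrix (Fin n) (Fin n) ℝ}
    {a : (Fin n → ℝ) → Fin n → ℝ} (hPskew : ∀ x k l, P x k l = - P x l k)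
    {u f g : (Fin n → ℝ) → ℝ} (hu : ContDiff ℝ (⊤ : ℕ∞) u) (hf : ContDiff ℝ (⊤ : ℕ∞) f)
    (hg : ContDiff ℝ (⊤ : ℕ∞) g) (x : Fin n → ℝ) :
    jacobiBracket P a (fun y => u y * f y) (fun y => u y * g y) x
      = u x * jacobiBracket (fun y => Matrix.of fun k l => u y * P y k l)
          (fun y k => u y * a y k - ∑ j, P y k j * pd u j y) f g x := by
  simp only [jacobiBracket, Matrix.of_apply, pd_mul' hu hf, pd_mul' hu hg]
  exact alg' (P x) (hPskew x) (a x) (fun k => pd u k x) (fun k => pd f k x)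
    (fun k => pd g k x) (u x) (f x) (g x)

theorem gauge_pencil_isJacobiTensor {n : ℕ} (P : (Fin n → ℝ) → Matrix (Fin n) (Fin n) ℝ)
    (a : (Fin n → ℝ) → Fin n → ℝ)
    (hP : ∀ k l, ContDiff ℝ (⊤ : ℕ∞) (fun x => P x k l))
    (hPskew : ∀ x k l, P x k l = - P x l k)
    (ha : ∀ k, ContDiff ℝ (⊤ : ℕ∞) (fun x => a x k))
    (hJac : IsJacobiTensor P a)
    (φ : (Fin n → ℝ) → ℝ) (hφ : ContDiff ℝ (⊤ : ℕ∞) φ) :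
    ∀ l : ℝ, 0 ≤ l →
      IsJacobiTensor (fun x => P x + l • gaugeP P φ x) (fun x => a x + l • gaugeA P a φ x) := by
  intro l hl
  -- the conformal factor
  set u : (Fin n → ℝ) → ℝ := fun x => 1 + l * Real.exp (φ x) with hu_def
  have hu : ContDiff ℝ (⊤ : ℕ∞) u := contDiff_const.add (contDiff_const.mul (Real.contDiff_exp.comp hφ))
  have hupos : ∀ x, 0 < u x := fun x => by
    have := Real.exp_pos (φ x)
    have : 0 ≤ l * Real.exp (φ x) := mul_nonneg hl this.le
    simp only [hu_def]; linarith
  -- derivative of u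
  have hpdu : ∀ (j : Fin n) (x : Fin n → ℝ),
      pd u j x = l * Real.exp (φ x) * pd φ j x := by
    intro j x
    have h1 : HasFDerivAt φ (fderiv ℝ φ x) x := (hφ.differentiable (by simp) x).hasFDerivAt
    have h2 : HasFDerivAt u ((l * Real.exp (φ x)) • fderiv ℝ φ x) x := by
      have h3 := (h1.exp.const_mul l).const_add 1
      rw [mul_smul]
      exact h3
    rw [pd, h2.fderiv]
    simp [pd, smul_eq_mul, mul_assoc]
  -- the pencil equals the `u`-gauge transform of (P, a)
  have hPt : (fun x => P x + l • gaugeP P φ x)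
      = fun y => Matrix.of fun k l' => u y * P y k l' := by
    funext x
    ext k m
    simp only [Matrix.add_apply, Matrix.smul_apply, gaugeP, Matrix.of_apply, smul_eq_mul, hu_def]
    ring
  have hat : (fun x => a x + l • gaugeA P a φ x)
      = fun y k => u y * a y k - ∑ j, P y k j * pd u j y := by
    funext x k
    simp only [Pi.add_apply, Pi.smul_apply, gaugeA, smul_eq_mul, hpdu]; simp only [hu_def]
    have hS : (∑ j, P x k j * (l * Real.exp (φ x) * pd φ j x))
        = l * Real.exp (φ x) * ∑ j, P x k j * pd φ j x := by
      rw [Finset.mul_sum]; exact Finset.sum_congr rfl fun j _ => by ring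
    rw [hS]; ring
  rw [hPt, hat]
  set P' : (Fin n → ℝ) → Matrix (Fin n) (Fin n) ℝ :=
    fun y => Matrix.of fun k l' => u y * P y k l' with hP'
  set a' : (Fin n → ℝ) → Fin n → ℝ :=
    fun y k => u y * a y k - ∑ j, P y k j * pd u j y with ha'
  intro f g h hf hg hh
  -- products with u are smooth
  have hum : ∀ {q : (Fin n → ℝ) → ℝ}, ContDiff ℝ (⊤ : ℕ∞) q → ContDiff ℝ (⊤ : ℕ∞) (fun y => u y * q y) :=
    fun hq => hu.mul hq
  -- key: u * (B' f g) = B (uf) (ug), pointwise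
  have key : ∀ (f g : (Fin n → ℝ) → ℝ), ContDiff ℝ (⊤ : ℕ∞) f → ContDiff ℝ (⊤ : ℕ∞) g →
      (fun y => u y * jacobiBracket P' a' f g y)
        = jacobiBracket P a (fun y => u y * f y) (fun y => u y * g y) := by
    intro f g hf hg
    funext x
    exact (gauge_bracket hPskew hu hf hg x).symm
  -- inner brackets are smooth
  have hBsmooth : ∀ (f g : (Fin n → ℝ) → ℝ), ContDiff ℝ (⊤ : ℕ∞) f → ContDiff ℝ (⊤ : ℕ∞) g →
      ContDiff ℝ (⊤ : ℕ∞) (jacobiBracket P' a' f g) := by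
    intro f g hf hg
    have h1 : ContDiff ℝ (⊤ : ℕ∞) (jacobiBracket P a (fun y => u y * f y) (fun y => u y * g y)) :=
      bracket_contDiff' hP ha (hum hf) (hum hg)
    rw [← key f g hf hg] at h1
    have h2 : ContDiff ℝ (⊤ : ℕ∞) (fun y => (u y)⁻¹) := hu.inv (fun y => (hupos y).ne')
    have : (jacobiBracket P' a' f g)
        = fun y => (u y)⁻¹ * (u y * jacobiBracket P' a' f g y) := by
      funext y
      rw [inv_mul_cancel_left₀ (hupos y).ne']
    rw [this]
    exact h2.mul h1
  -- outer identity: u * (B' f (B' g h)) = B (uf) (B (ug) (uh)), pointwise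
  have outer : ∀ (f g h : (Fin n → ℝ) → ℝ) (hf : ContDiff ℝ (⊤ : ℕ∞) f) (hg : ContDiff ℝ (⊤ : ℕ∞) g)
      (hh : ContDiff ℝ (⊤ : ℕ∞) h) (x : Fin n → ℝ),
      u x * jacobiBracket P' a' f (jacobiBracket P' a' g h) x
        = jacobiBracket P a (fun y => u y * f y)
            (jacobiBracket P a (fun y => u y * g y) (fun y => u y * h y)) x := by
    intro f g h hf hg hh x
    have h1 := gauge_bracket (a := a) hPskew hu hf (hBsmooth g h hg hh) x
    rw [key g h hg hh] at h1
    exact h1.symm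
  have hsum := hJac (fun y => u y * f y) (fun y => u y * g y) (fun y => u y * h y)
    (hum hf) (hum hg) (hum hh)
  funext x
  have hx := congrFun hsum x
  simp only [Pi.add_apply, Pi.zero_apply] at hx ⊢
  rw [← outer f g h hf hg hh x, ← outer g h f hg hh hf x, ← outer h f g hh hf hg x] at hx
  have := hupos x
  have hfac : u x * (jacobiBracket P' a' f (jacobiBracket P' a' g h) x
      + jacobiBracket P' a' g (jacobiBracket P' a' h f) x
      + jacobiBracket P' a' h (jacobiBracket P' a' f g) x) = 0 := by linarith [hx]
  have := mul_eq_zero.mp hfac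
  rcases this with h0 | h0
  · exact absurd h0 (hupos x).ne'
  · exact h0
end
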